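/- Every ideal of ℓ∞ is flat as an ℓ∞-module. -/

import Mathlib

/-! In a reduced ring an ideal `I` is flat as soon as every finite family `xᵢ` in `I` factors as
`xᵢ = cᵢ * g` through one `g ∈ I` with `Ann g ⊆ Ann cᵢ`: a relation `∑ fᵢ xᵢ = 0` then says
that `a = ∑ fᵢ cᵢ` kills `g`, so `a² = ∑ fᵢ (a cᵢ) = 0`, hence `a = 0` and the relation is
trivial. In `ℓ∞` take `g = ∑ |xᵢ|`, which lies in the ideal because `|x| = (x̄ / |x|) x`, and
`cᵢ = xᵢ / g`, which is bounded by `1` and, with `x / 0 = 0`, vanishes wherever `g` does. -/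

/- `ℓ∞` is the ring of bounded sequences of complex numbers, with pointwise operations.
We realize it as `lp (fun _ : ℕ => ℂ) ⊤`. -/

noncomputable section
set_option synthInstance.maxHeartbeats 400000

abbrev ellInf := lp (fun _ : ℕ => ℂ) ⊤

open scoped ENNReal

theorem Ideal.flat_of_forall_exists_factor {R : Type*} [CommRing R] [IsReduced R] (I : Ideal R)
    (h : ∀ {l : ℕ} (x : Fin l → I), ∃ g ∈ I, ∃ c : Fin l → R,
      (∀ i, (x i : R) = c i * g) ∧ ∀ a, a * g = 0 → ∀ i, a * c i = 0) :
    Module.Flat R I := by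
  refine Module.Flat.of_forall_isTrivialRelation fun {l f x} hfx => ?_
  obtain ⟨g, hg, c, hxc, hann⟩ := h x
  have hag : (∑ i, f i * c i) * g = 0 := by
    simpa [Finset.sum_mul, mul_assoc, hxc] using congrArg Subtype.val hfx
  have ha : ∑ i, f i * c i = 0 := by
    refine IsReduced.eq_zero _ ⟨2, ?_⟩
    rw [sq, Finset.mul_sum]
    exact Finset.sum_eq_zero fun i _ => by rw [mul_left_comm, hann _ hag i, mul_zero]
  exact ⟨1, fun i _ => c i, fun _ => ⟨g, hg⟩, fun i => Subtype.ext (by simp [hxc]), fun _ => ha⟩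

namespace lp

instance infty_isReduced {ι : Type*} {B : ι → Type*} [∀ i, NormedRing (B i)]
    [∀ i, NormOneClass (B i)] [∀ i, IsReduced (B i)] : IsReduced (lp B ∞) :=
  ⟨fun a ⟨n, hn⟩ => lp.ext <| funext fun i =>
    IsReduced.eq_zero _ ⟨n, by simpa [lp.infty_coeFn_pow] using congrFun (congrArg (⇑) hn) i⟩⟩

variable {ι 𝕜 : Type*}

lemma exists_mul_eq_of_norm_le [NormedField 𝕜] {a b : lp (fun _ : ι => 𝕜) ∞}
    (h : ∀ n, ‖a n‖ ≤ ‖b n‖) :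
    ∃ c : lp (fun _ : ι => 𝕜) ∞, c * b = a ∧ ∀ r, r * b = 0 → r * c = 0 := by
  have hc : Memℓp (fun n => a n / b n) ∞ := by
    refine memℓp_infty ⟨1, ?_⟩
    rintro _ ⟨n, rfl⟩
    show ‖a n / b n‖ ≤ 1
    rw [norm_div]
    exact div_le_one_of_le₀ (h n) (norm_nonneg _)
  refine ⟨⟨_, hc⟩, lp.ext <| funext fun n => ?_, fun r hr => lp.ext <| funext fun n => ?_⟩
  · rcases eq_or_ne (b n) 0 with hbn | hbn
    · have han : a n = 0 := norm_le_zero_iff.mp (by simpa [hbn] using h n)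
      simp [lp.infty_coeFn_mul, hbn, han]
    · simp [lp.infty_coeFn_mul, hbn]
  · have hrb : r n * b n = 0 := by
      simpa [lp.infty_coeFn_mul] using congrFun (congrArg (⇑) hr) n
    rcases mul_eq_zero.mp hrb with h0 | h0 <;> simp [lp.infty_coeFn_mul, h0]

variable [RCLike 𝕜]

def pointwiseNorm (x : lp (fun _ : ι => 𝕜) ∞) : lp (fun _ : ι => 𝕜) ∞ :=
  ⟨fun n => (‖x n‖ : 𝕜), memℓp_infty ⟨‖x‖, by
    rintro _ ⟨n, rfl⟩; simpa using norm_apply_le_norm ENNReal.top_ne_zero x n⟩⟩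

@[simp]
lemma pointwiseNorm_apply (x : lp (fun _ : ι => 𝕜) ∞) (n : ι) :
    pointwiseNorm x n = (‖x n‖ : 𝕜) := rfl

lemma pointwiseNorm_mem_span_singleton (x : lp (fun _ : ι => 𝕜) ∞) :
    pointwiseNorm x ∈ Ideal.span {x} := by
  obtain ⟨c, hc, -⟩ := exists_mul_eq_of_norm_le (a := pointwiseNorm x) (b := x) (by simp)
  exact Ideal.mem_span_singleton'.mpr ⟨c, hc⟩

lemma exists_common_factor {κ : Type*} [Fintype κ] (x : κ → lp (fun _ : ι => 𝕜) ∞) :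
    ∃ g ∈ Ideal.span (Set.range x), ∃ c : κ → lp (fun _ : ι => 𝕜) ∞,
      (∀ i, x i = c i * g) ∧ ∀ r, r * g = 0 → ∀ i, r * c i = 0 := by
  set g := ∑ i, pointwiseNorm (x i)
  have hg : g ∈ Ideal.span (Set.range x) :=
    Ideal.sum_mem _ fun i _ => Ideal.span_mono (by simp) (pointwiseNorm_mem_span_singleton (x i))
  have hle : ∀ i n, ‖x i n‖ ≤ ‖g n‖ := fun i n => by
    have hgn : g n = ((∑ j, ‖x j n‖ : ℝ) : 𝕜) := by
      rw [lp.coeFn_sum, Finset.sum_apply]; simp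
    rw [hgn, RCLike.norm_ofReal, abs_of_nonneg (by positivity)]
    exact Finset.single_le_sum (f := fun j => ‖x j n‖) (fun _ _ => norm_nonneg _)
      (Finset.mem_univ i)
  choose c hc hann using fun i => exists_mul_eq_of_norm_le (hle i)
  exact ⟨g, hg, c, fun i => (hc i).symm, fun r hr i => hann i r hr⟩

end lp

/-- Every ideal of `ℓ∞` is flat as an `ℓ∞`-module. -/
theorem ideal_ellInf_flat (I : Ideal ellInf) : Module.Flat ellInf I := by
  refine I.flat_of_forall_exists_factor fun x => ?_
  obtain ⟨g, hg, c, hxc, hann⟩ := lp.exists_common_factor fun i => (x i : ellInf)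
  refine ⟨g, Ideal.span_le.mpr ?_ hg, c, hxc, hann⟩
  rintro _ ⟨i, rfl⟩
  exact (x i).2
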